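/- Let E be a connected directed graph satisfying the single entry condition (every vertex receives exactly one edge) with no sinks, and suppose no loop in E has an exit. Then either E consists of a single loop, or E contains no loops at all (so E is a directed tree). -/
import Mathlib


/-- A directed graph `E = (E⁰, E¹, r, s)`. -/
structure Digraph1 where
  V : Type
  E : Type
  r : E → V
  s : E → V

namespace Digraph1

variable (G : Digraph1)

/-- `μ : Fin (n+1) → E` is a path if consecutive edges compose: `r(μᵢ) = s(μᵢ₊₁)`. -/
def IsPath {n : ℕ} (μ : Fin (n + 1) → G.E) : Prop :=
  ∀ i : Fin n, G.r (μ i.castSucc) = G.s (μ i.succ)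

/-- A loop is a path whose source equals its range. -/
def IsLoop {n : ℕ} (μ : Fin (n + 1) → G.E) : Prop :=
  G.IsPath μ ∧ G.s (μ 0) = G.r (μ (Fin.last n))

/-- A loop has an exit if some vertex on it emits more than one edge. -/
def LoopHasExit {n : ℕ} (μ : Fin (n + 1) → G.E) : Prop :=
  ∃ (i : Fin (n + 1)) (e e' : G.E), e ≠ e' ∧ G.s e = G.s (μ i) ∧ G.s e' = G.s (μ i)

/-- Adjacency in the underlying undirected graph. -/
def Adj (v w : G.V) : Prop :=
  ∃ e : G.E, (G.s e = v ∧ G.r e = w) ∨ (G.s e = w ∧ G.r e = v)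

end Digraph1

/-- a connected directed graph satisfying the single entry condition, with no
sinks and no loop having an exit, either consists of a single loop or has no loops at all. -/
theorem stmt_1 (G : Digraph1)
    (hconn : ∀ v w : G.V, Relation.ReflTransGen G.Adj v w)
    (hentry : ∀ v : G.V, ∃! e : G.E, G.r e = v)
    (hnosink : ∀ v : G.V, ∃ e : G.E, G.s e = v)
    (hnoexit : ∀ (n : ℕ) (μ : Fin (n + 1) → G.E), G.IsLoop μ → ¬ G.LoopHasExit μ) :
    (∃ (n : ℕ) (μ : Fin (n + 1) → G.E), G.IsLoop μ ∧ Function.Bijective μ ∧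
      Function.Bijective fun i => G.s (μ i)) ∨
    (∀ (n : ℕ) (μ : Fin (n + 1) → G.E), ¬ G.IsLoop μ) := by
  classical
  by_cases hloop : ∃ (n : ℕ) (μ : Fin (n + 1) → G.E), G.IsLoop μ
  · left
    obtain ⟨n, μ, hμ⟩ := hloop
    obtain ⟨hpath, hclose⟩ := hμ
    -- r is injective
    have r_inj : Function.Injective G.r := by
      intro e e' h
      obtain ⟨e'', -, hu⟩ := hentry (G.r e)
      exact (hu e rfl).trans (hu e' h.symm).symm
    -- cyclic successor of loop vertices
    have next : ∀ i : Fin (n + 1), ∃ j : Fin (n + 1), G.s (μ j) = G.r (μ i) := by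
      intro i
      by_cases h : i = Fin.last n
      · exact ⟨0, h ▸ hclose⟩
      · have hi : (i : ℕ) < n := by
          have := i.isLt
          rcases Nat.lt_or_ge (i : ℕ) n with h' | h'
          · exact h'
          · exact absurd (Fin.ext (by omega : (i : ℕ) = n)) h
        refine ⟨⟨(i : ℕ) + 1, by omega⟩, ?_⟩
        have hp := hpath ⟨(i : ℕ), hi⟩
        have h1 : (⟨(i : ℕ), hi⟩ : Fin n).castSucc = i := Fin.ext rfl
        have h2 : (⟨(i : ℕ), hi⟩ : Fin n).succ = ⟨(i : ℕ) + 1, by omega⟩ := Fin.ext rfl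
        rw [h1, h2] at hp
        exact hp.symm
    -- cyclic predecessor of loop vertices
    have prev : ∀ i : Fin (n + 1), ∃ j : Fin (n + 1), G.r (μ j) = G.s (μ i) := by
      intro i
      by_cases h : i = 0
      · exact ⟨Fin.last n, h ▸ hclose.symm⟩
      · have hi : 0 < (i : ℕ) := by
          rcases Nat.eq_zero_or_pos (i : ℕ) with h' | h'
          · exact absurd (Fin.ext h') h
          · exact h'
        have hi1 : (i : ℕ) - 1 < n := by have := i.isLt; omega
        refine ⟨⟨(i : ℕ) - 1, by omega⟩, ?_⟩
        have hp := hpath ⟨(i : ℕ) - 1, hi1⟩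
        have h1 : (⟨(i : ℕ) - 1, hi1⟩ : Fin n).castSucc = ⟨(i : ℕ) - 1, by omega⟩ :=
          Fin.ext rfl
        have h2 : (⟨(i : ℕ) - 1, hi1⟩ : Fin n).succ = i := Fin.ext (by simp; omega)
        rw [h1, h2] at hp
        exact hp
    -- every vertex is on the loop
    have onloop : ∀ v : G.V, ∃ i : Fin (n + 1), G.s (μ i) = v := by
      intro v
      have h := hconn (G.s (μ 0)) v
      induction h with
      | refl => exact ⟨0, rfl⟩
      | tail hab hbc ih =>
        obtain ⟨i, hi⟩ := ih
        obtain ⟨e, he | he⟩ := hbc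
        · -- e leaves b
          have heq : e = μ i := by
            by_contra hne
            exact hnoexit n μ ⟨hpath, hclose⟩
              ⟨i, e, μ i, hne, he.1.trans hi.symm, rfl⟩
          obtain ⟨j, hj⟩ := next i
          exact ⟨j, hj.trans (heq ▸ he.2)⟩
        · -- e enters b
          obtain ⟨j, hj⟩ := prev i
          have heq : μ j = e := r_inj (hj.trans (hi.trans he.2.symm))
          exact ⟨j, by rw [heq]; exact he.1⟩
    -- s is injective
    have s_inj : Function.Injective G.s := by
      intro e e' h
      obtain ⟨i, hi⟩ := onloop (G.s e)
      by_contra hne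
      exact hnoexit n μ ⟨hpath, hclose⟩ ⟨i, e, e', hne, hi.symm, h.symm.trans hi.symm⟩
    -- every edge is on the loop
    have edge_eq : ∀ e : G.E, ∃ i : Fin (n + 1), μ i = e := by
      intro e
      obtain ⟨i, hi⟩ := onloop (G.s e)
      exact ⟨i, s_inj hi⟩
    -- successor edge map
    have hsig : ∀ e : G.E, ∃ e', G.s e' = G.r e := fun e => hnosink (G.r e)
    set σ : G.E → G.E := fun e => (hsig e).choose with hσdef
    have hσ : ∀ e, G.s (σ e) = G.r e := fun e => (hsig e).choose_spec
    have σ_inj : Function.Injective σ := by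
      intro e e' h
      apply r_inj
      rw [← hσ e, ← hσ e', h]
    set f : ℕ → G.E := fun k => σ^[k] (μ 0) with hfdef
    have hfs : ∀ k, f (k + 1) = σ (f k) := fun k =>
      Function.iterate_succ_apply' σ k (μ 0)
    -- f agrees with μ
    have hfμ : ∀ k (h : k < n + 1), f k = μ ⟨k, h⟩ := by
      intro k
      induction k with
      | zero => intro h; rfl
      | succ k ih =>
        intro h
        have hk : k < n + 1 := by omega
        have hkn : k < n := by omega
        rw [hfs, ih hk]
        apply s_inj
        rw [hσ]
        have hp := hpath ⟨k, hkn⟩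
        have h1 : (⟨k, hkn⟩ : Fin n).castSucc = ⟨k, hk⟩ := Fin.ext rfl
        have h2 : (⟨k, hkn⟩ : Fin n).succ = ⟨k + 1, h⟩ := Fin.ext rfl
        rw [h1, h2] at hp
        exact hp
    have hfn : f (n + 1) = μ 0 := by
      rw [hfs, hfμ n (by omega)]
      apply s_inj
      rw [hσ]
      have : (⟨n, by omega⟩ : Fin (n + 1)) = Fin.last n := Fin.ext rfl
      rw [this]
      exact hclose.symm
    -- minimal period
    have hex : ∃ k, 0 < k ∧ f k = μ 0 := ⟨n + 1, by omega, hfn⟩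
    obtain ⟨m, hm, hmin'⟩ : ∃ m, (0 < m ∧ f m = μ 0) ∧ ∀ k < m, ¬(0 < k ∧ f k = μ 0) :=
      ⟨Nat.find hex, Nat.find_spec hex, fun k hk => Nat.find_min hex hk⟩
    have hmin : ∀ k, 0 < k → k < m → f k ≠ μ 0 := fun k h1 h2 hf =>
      hmin' k h2 ⟨h1, hf⟩
    have hperm : ∀ k, f (k + m) = f k := by
      intro k
      show σ^[k + m] (μ 0) = σ^[k] (μ 0)
      rw [Function.iterate_add_apply]
      exact congrArg _ hm.2
    have hmul : ∀ q k, f (k + m * q) = f k := by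
      intro q
      induction q with
      | zero => simp
      | succ q ih =>
        intro k
        have : k + m * (q + 1) = (k + m * q) + m := by ring
        rw [this, hperm, ih]
    have hmod : ∀ k, f k = f (k % m) := by
      intro k
      conv_lhs => rw [← Nat.mod_add_div k m]
      exact hmul (k / m) (k % m)
    -- injectivity below m
    have hfinj : ∀ a b, a ≤ b → b < m → f a = f b → a = b := by
      intro a b hab hb hf
      by_contra hne
      have hd : 0 < b - a := by omega
      have : f (b - a) = μ 0 := by
        have hiter : Function.Injective (σ^[a]) := Function.Injective.iterate σ_inj a
        apply hiter
        show σ^[a] (σ^[b - a] (μ 0)) = σ^[a] (μ 0)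
        rw [← Function.iterate_add_apply]
        have : a + (b - a) = b := by omega
        rw [this]
        exact hf.symm
      exact hmin (b - a) hd (by omega) this
    obtain ⟨n', hn'⟩ : ∃ n', m = n' + 1 := ⟨m - 1, by have := hm.1; omega⟩
    refine ⟨n', fun i => f (i : ℕ), ⟨?_, ?_⟩, ?_, ?_⟩
    · -- path
      intro i
      show G.r (f ((i.castSucc : Fin (n' + 1)) : ℕ)) = G.s (f ((i.succ : Fin (n' + 1)) : ℕ))
      rw [Fin.coe_castSucc, Fin.val_succ, hfs, hσ]
    · -- closes up
      show G.s (f ((0 : Fin (n' + 1)) : ℕ)) = G.r (f ((Fin.last n' : Fin (n' + 1)) : ℕ))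
      rw [Fin.val_zero, Fin.val_last]
      have h1 : f m = μ 0 := hm.2
      rw [hn'] at h1
      calc G.s (f 0) = G.s (f (n' + 1)) := by rw [h1]; rfl
        _ = G.r (f n') := by rw [hfs, hσ]
    · -- bijective on edges
      constructor
      · intro i j h
        rcases le_total (i : ℕ) (j : ℕ) with hle | hle
        · exact Fin.ext (hfinj _ _ hle (by omega) h)
        · exact Fin.ext ((hfinj _ _ hle (by omega) h.symm)).symm
      · intro e
        obtain ⟨i, hi⟩ := edge_eq e
        have h1 : f (i : ℕ) = e := by
          rw [hfμ (i : ℕ) i.isLt]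
          rw [← hi]
        refine ⟨⟨(i : ℕ) % m, by rw [← hn']; exact Nat.mod_lt _ hm.1⟩, ?_⟩
        show f ((i : ℕ) % m) = e
        rw [← hmod]
        exact h1
    · -- bijective on vertices
      constructor
      · intro i j h
        rcases le_total (i : ℕ) (j : ℕ) with hle | hle
        · exact Fin.ext (hfinj _ _ hle (by omega) (s_inj h))
        · exact Fin.ext ((hfinj _ _ hle (by omega) (s_inj h.symm))).symm
      · intro v
        obtain ⟨e, he⟩ := hnosink v
        obtain ⟨i, hi⟩ := edge_eq e
        have h1 : f (i : ℕ) = e := by rw [hfμ (i : ℕ) i.isLt, ← hi]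
        refine ⟨⟨(i : ℕ) % m, by rw [← hn']; exact Nat.mod_lt _ hm.1⟩, ?_⟩
        show G.s (f ((i : ℕ) % m)) = v
        rw [← hmod, h1, he]
  · right
    intro n μ h
    exact hloop ⟨n, μ, h⟩
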